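/- Main theorem (arbitrary finitely many factors): Let G_1, ..., G_k be qf-stable groups and let ∗G_s denote their free product. For every group word w(x̄, ȳ) and every r ≥ 1 there exists n (depending on w and r) bounding the m for which there exist tuples ā_1,...,ā_m and b̄_1,...,b̄_m with entries in B_r(∗G_s) such that w(ā_i, b̄_j) = 1 iff i ≤ j. -/

import Mathlib

/-!
Write every entry of the tuples as a product of `r` letters. Then `w(āᵢ, b̄ⱼ)` is a product of a
fixed number of letters, each a letter of `āᵢ` or of `b̄ⱼ` or the inverse of one. Whether such a
product is trivial is decided by reducing it to normal form, and the reduction only consults, for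
each factor `Gₛ` and each set `A` of positions, whether the letters at `A` multiply to `1` in `Gₛ`:
a quantifier-free equation in `Gₛ`, hence a stable relation. A relation determined by finitely many
stable relations is stable by Ramsey's theorem: a long ladder has a long subsequence on which each
of these relations is constant above the diagonal and constant below it, and for one of them the
two constants differ, which yields a long ladder for that relation.
-/

open Monoid

/-- A group `G` is qf-stable if every group-word equation `w(x̄, ȳ) = 1` defines a
stable relation on tuples from `G`. -/
def QFStable (G : Type*) [Group G] : Prop :=
  ∀ (p q : ℕ) (w : FreeGroup (Fin p ⊕ Fin q)), ∃ n : ℕ, ∀ m : ℕ,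
    (∃ (a : Fin m → Fin p → G) (b : Fin m → Fin q → G),
      ∀ i j, FreeGroup.lift (Sum.elim (a i) (b j)) w = 1 ↔ i ≤ j) → m ≤ n

/-- The ball of radius `r` in the free product `∗ Gₛ` of the family `Gₛ`: elements
whose normal form has length at most `r`, equivalently products of at most `r`
letters, each letter coming from one of the factors. -/
def coprodIBall {ι : Type*} (G : ι → Type*) [∀ s, Group (G s)] (r : ℕ) :
    Set (CoprodI G) :=
  {x | ∃ l : List (CoprodI G), l.length ≤ r ∧
    (∀ y ∈ l, ∃ (s : ι) (g : G s), y = CoprodI.of g) ∧ x = l.prod}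

section Ramsey

lemma exists_orderEmbedding_monochromatic {α C : Type*} [LinearOrder α] [Fintype α] [Finite C]
    [Nonempty C] (f : α → C) {n : ℕ} (h : Nat.card C * n ≤ Fintype.card α) :
    ∃ (g : Fin n ↪o α) (c : C), ∀ i, f (g i) = c := by
  classical
  have := Fintype.ofFinite C
  obtain ⟨c, hc⟩ :=
    Fintype.exists_le_card_fiber_of_mul_le_card f (by rwa [← Nat.card_eq_fintype_card])
  obtain ⟨T, hT, hTcard⟩ := Finset.exists_subset_card_eq hc
  exact ⟨T.orderEmbOfFin hTcard, c,
    fun i => (Finset.mem_filter.1 (hT (T.orderEmbOfFin_mem hTcard i))).2⟩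

theorem exists_strictMono_endHomogeneous {C : Type*} [Finite C] (h : ℕ) :
    ∃ N, ∀ f : Fin N → Fin N → C, ∃ (e : Fin h → Fin N) (col : Fin h → C),
      StrictMono e ∧ ∀ i j, i < j → f (e i) (e j) = col i := by
  induction h with
  | zero => exact ⟨0, fun _ => ⟨Fin.elim0, Fin.elim0, fun i => i.elim0, fun i => i.elim0⟩⟩
  | succ h ih =>
    obtain ⟨N, hN⟩ := ih
    refine ⟨Nat.card C * N + 1, fun f => ?_⟩
    have : Nonempty C := ⟨f 0 0⟩
    obtain ⟨g, c, hg⟩ := exists_orderEmbedding_monochromatic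
      (fun u : Fin (Nat.card C * N) => f 0 u.succ) (n := N) (by simp)
    obtain ⟨e, col, he, hcol⟩ := hN fun i j => f (g i).succ (g j).succ
    refine ⟨Fin.cons 0 fun i => (g (e i)).succ, Fin.cons c col,
      Fin.strictMono_cons.2
        ⟨fun _ => Fin.succ_pos _, Fin.strictMono_succ.comp (g.strictMono.comp he)⟩,
      fun i j hij => ?_⟩
    induction j using Fin.cases with
    | zero => exact absurd hij (Fin.not_lt_zero i)
    | succ j =>
      induction i using Fin.cases with
      | zero => simpa using hg (e j)
      | succ i => simpa using hcol i j (Fin.succ_lt_succ_iff.1 hij)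

theorem exists_strictMono_monochromatic {C : Type*} [Finite C] (t : ℕ) :
    ∃ N, ∀ f : Fin N → Fin N → C, ∃ (e : Fin t → Fin N) (c : C),
      StrictMono e ∧ ∀ i j, i < j → f (e i) (e j) = c := by
  obtain ⟨N, hN⟩ := exists_strictMono_endHomogeneous (C := C) (Nat.card C * t + 1)
  refine ⟨N, fun f => ?_⟩
  obtain ⟨e, col, he, hcol⟩ := hN f
  have : Nonempty C := ⟨col 0⟩
  obtain ⟨g, c, hg⟩ := exists_orderEmbedding_monochromatic col (n := t) (by simp)
  exact ⟨e ∘ g, c, he.comp g.strictMono, fun i j hij => (hcol _ _ (g.strictMono hij)).trans (hg i)⟩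

end Ramsey

section Ladder

variable {X Y : Type*}

def HasLadder (R : X → Y → Prop) (m : ℕ) : Prop :=
  ∃ (a : Fin m → X) (b : Fin m → Y), ∀ i j, R (a i) (b j) ↔ i ≤ j

def IsStableRel (R : X → Y → Prop) : Prop :=
  ∃ n, ∀ m, HasLadder R m → m ≤ n

lemma HasLadder.mono {R : X → Y → Prop} {m N : ℕ} (h : HasLadder R m) (hN : N ≤ m) :
    HasLadder R N :=
  let ⟨a, b, hab⟩ := h
  ⟨a ∘ Fin.castLE hN, b ∘ Fin.castLE hN, fun _ _ => (hab _ _).trans (Fin.castLE_le_castLE_iff hN)⟩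

lemma HasLadder.map {X' Y' : Type*} {R : X → Y → Prop} {S : X' → Y' → Prop} (f : X → X')
    (g : Y → Y') (hRS : ∀ x y, R x y ↔ S (f x) (g y)) {m : ℕ} (h : HasLadder R m) :
    HasLadder S m :=
  let ⟨a, b, hab⟩ := h
  ⟨f ∘ a, g ∘ b, fun i j => (hRS _ _).symm.trans (hab i j)⟩

lemma IsStableRel.comap {X' Y' : Type*} {R : X → Y → Prop} {S : X' → Y' → Prop} (f : X → X')
    (g : Y → Y') (hRS : ∀ x y, R x y ↔ S (f x) (g y)) (hS : IsStableRel S) : IsStableRel R :=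
  let ⟨n, hn⟩ := hS
  ⟨n, fun m hm => hn m (hm.map f g hRS)⟩

lemma IsStableRel.eventually {R : X → Y → Prop} (hR : IsStableRel R) :
    ∀ᶠ n in Filter.atTop, ∀ m, HasLadder R m → m ≤ n :=
  let ⟨n, hn⟩ := hR
  Filter.eventually_atTop.2 ⟨n, fun _ hn' m hm => (hn m hm).trans hn'⟩

lemma hasLadder_of_homogeneous {R : X → Y → Prop} {n : ℕ} {a : Fin (2 * n) → X}
    {b : Fin (2 * n) → Y} {P Q : Prop} (hPQ : ¬(P ↔ Q))
    (hP : ∀ i j, i < j → (R (a i) (b j) ↔ P)) (hQ : ∀ i j, i < j → (R (a j) (b i) ↔ Q)) :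
    HasLadder R n := by
  wlog hp : P generalizing a b P Q
  · exact this (a := a ∘ Fin.rev) (b := b ∘ Fin.rev) (fun h => hPQ h.symm)
      (fun i j hij => hQ _ _ (Fin.rev_lt_rev.2 hij)) (fun i j hij => hP _ _ (Fin.rev_lt_rev.2 hij))
      (by tauto)
  have hq : ¬Q := fun hq => hPQ (iff_of_true hp hq)
  refine ⟨fun i => a ⟨2 * i, by omega⟩, fun j => b ⟨2 * j + 1, by omega⟩, fun i j => ?_⟩
  rcases le_or_gt i j with hij | hij
  · exact iff_of_true ((hP _ _ (Fin.mk_lt_mk.2 (by omega))).2 hp) hij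
  · exact iff_of_false (fun h => hq ((hQ _ _ (Fin.mk_lt_mk.2 (by omega))).1 h)) (not_le.2 hij)

theorem IsStableRel.of_determined {κ : Type*} [Finite κ] {Φ : X → Y → κ → Prop}
    (hΦ : ∀ c, IsStableRel fun x y => Φ x y c) {R : X → Y → Prop}
    (hR : ∀ x y x' y', Φ x y = Φ x' y' → R x y → R x' y') : IsStableRel R := by
  obtain ⟨B, hB⟩ := (Filter.eventually_all.2 fun c => (hΦ c).eventually).exists
  obtain ⟨N, hN⟩ := exists_strictMono_monochromatic (C := (κ → Prop) × (κ → Prop)) (2 * (B + 1))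
  refine ⟨N, fun m hm => le_of_not_gt fun hNm => ?_⟩
  obtain ⟨a, b, hab⟩ := hm.mono hNm.le
  obtain ⟨e, c, he, hc⟩ := hN fun i j => (Φ (a i) (b j), Φ (a j) (b i))
  let i₀ : Fin (2 * (B + 1)) := ⟨0, by omega⟩
  let i₁ : Fin (2 * (B + 1)) := ⟨1, by omega⟩
  have h01 : i₀ < i₁ := Fin.mk_lt_mk.2 one_pos
  have hc12 : c.1 ≠ c.2 := fun h => by
    have hΦ : Φ (a (e i₀)) (b (e i₁)) = Φ (a (e i₁)) (b (e i₀)) :=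
      (congrArg Prod.fst (hc _ _ h01)).trans (h.trans (congrArg Prod.snd (hc _ _ h01)).symm)
    exact not_le.2 (he h01) ((hab _ _).1 (hR _ _ _ _ hΦ ((hab _ _).2 (he h01).le)))
  obtain ⟨c₀, hc₀⟩ : ∃ c₀, ¬(c.1 c₀ ↔ c.2 c₀) := by
    by_contra! h
    exact hc12 (funext fun c₀ => propext (h c₀))
  have := hB c₀ (B + 1) (hasLadder_of_homogeneous (a := a ∘ e) (b := b ∘ e) hc₀
    (fun i j hij => by rw [← hc i j hij]; rfl) (fun i j hij => by rw [← hc i j hij]; rfl))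
  omega

end Ladder

lemma FreeGroup.apply_lift {α H H' : Type*} [Group H] [Group H'] (f : H →* H') (φ : α → H)
    (w : FreeGroup α) : f (FreeGroup.lift φ w) = FreeGroup.lift (f ∘ φ) w :=
  FreeGroup.lift_unique (f.comp (FreeGroup.lift φ)) (by simp)

theorem QFStable.isStableRel {G : Type*} [Group G] (hG : QFStable G) {α β : Type*} [Finite α]
    [Finite β] (w : FreeGroup (α ⊕ β)) :
    IsStableRel fun (a : α → G) (b : β → G) => FreeGroup.lift (Sum.elim a b) w = 1 := by
  obtain ⟨p, ⟨eα⟩⟩ := Finite.exists_equiv_fin α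
  obtain ⟨q, ⟨eβ⟩⟩ := Finite.exists_equiv_fin β
  have hS : IsStableRel fun (a : Fin p → G) (b : Fin q → G) =>
      FreeGroup.lift (Sum.elim a b) (FreeGroup.map (Sum.map eα eβ) w) = 1 := hG p q _
  refine hS.comap (fun a => a ∘ eα.symm) (fun b => b ∘ eβ.symm) fun a b => ?_
  rw [FreeGroup.map_eq_lift, FreeGroup.apply_lift]
  congr!
  ext (z | z) <;> simp

def orderedProd {M : Type*} [Monoid M] {n : ℕ} (x : Fin n → M) (A : Finset (Fin n)) : M :=
  ((A.sort (· ≤ ·)).map x).prod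

section OrderedProd

variable {M : Type*} [Monoid M] {n : ℕ} (x : Fin n → M)

@[simp]
lemma orderedProd_singleton (v : Fin n) : orderedProd x {v} = x v := by
  simp [orderedProd]

lemma orderedProd_insert {v : Fin n} {A : Finset (Fin n)} (hv : ∀ u ∈ A, v < u) :
    orderedProd x (insert v A) = x v * orderedProd x A := by
  rw [orderedProd, Finset.sort_insert _ (fun u hu => (hv u hu).le) fun h => lt_irrefl v (hv v h),
    List.map_cons, List.prod_cons, orderedProd]

lemma map_orderedProd {N F : Type*} [Monoid N] [FunLike F M N] [MonoidHomClass F M N] (f : F)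
    (A : Finset (Fin n)) : f (orderedProd x A) = orderedProd (f ∘ x) A := by
  simp [orderedProd, map_list_prod]

lemma orderedProd_mem {S : Type*} [SetLike S M] [SubmonoidClass S M] {K : S} {A : Finset (Fin n)}
    (h : ∀ u ∈ A, x u ∈ K) : orderedProd x A ∈ K :=
  list_prod_mem (by simpa using h)

end OrderedProd

lemma List.prod_ofFn_getD_one {M : Type*} [Monoid M] :
    ∀ {r : ℕ} (l : List M), l.length ≤ r → (List.ofFn fun u : Fin r => l.getD u 1).prod = l.prod
  | _, [], _ => by simp
  | 0, _ :: _, h => absurd h (by simp)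
  | r + 1, a :: l, h => by
    simp only [List.ofFn_succ, List.prod_cons, Fin.val_zero, Fin.val_succ, List.getD_cons_zero,
      List.getD_cons_succ, List.prod_ofFn_getD_one l (Nat.le_of_succ_le_succ h)]

def letterWords {V : Type*} [DecidableEq V] (W : FreeGroup V) (v : Fin W.toWord.length) :
    FreeGroup V :=
  FreeGroup.mk [W.toWord[v]]

lemma lift_eq_prod_ofFn_letterWords {V H : Type*} [DecidableEq V] [Group H] (φ : V → H)
    (W : FreeGroup V) :
    FreeGroup.lift φ W = (List.ofFn (FreeGroup.lift φ ∘ letterWords W)).prod := by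
  conv_lhs => rw [← FreeGroup.mk_toWord (x := W), FreeGroup.lift_mk, ← List.ofFn_getElem_eq_map]
  congr 2 with v
  simp [letterWords, FreeGroup.lift_mk]

def splitVars {α β : Type*} (r : ℕ) (w : FreeGroup (α ⊕ β)) : FreeGroup (α × Fin r ⊕ β × Fin r) :=
  FreeGroup.lift (fun z => (List.ofFn fun u => FreeGroup.of (Sum.map (·, u) (·, u) z)).prod) w

lemma lift_splitVars {α β H : Type*} [Group H] {r : ℕ} (a : α × Fin r → H) (b : β × Fin r → H)
    (w : FreeGroup (α ⊕ β)) :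
    FreeGroup.lift (Sum.elim a b) (splitVars r w) =
      FreeGroup.lift (Sum.elim (fun t => (List.ofFn fun u => a (t, u)).prod)
        (fun t => (List.ofFn fun u => b (t, u)).prod)) w := by
  rw [splitVars, FreeGroup.apply_lift]
  congr 1
  ext (t | t) <;> simp [map_list_prod, List.map_ofFn, Function.comp_def]

namespace Monoid.CoprodI

variable {ι : Type*} {G : ι → Type*} [∀ i, Group (G i)]

/- `1` counts as a letter so that every element of the ball of radius `r` is a product of exactly
`r` letters. -/
variable (G) in
def IsLetter (y : CoprodI G) : Prop :=
  y = 1 ∨ ∃ s, y ∈ (of : G s →* CoprodI G).range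

lemma IsLetter.inv {y : CoprodI G} (hy : IsLetter G y) : IsLetter G y⁻¹ := by
  obtain rfl | ⟨s, hs⟩ := hy
  · exact .inl inv_one
  · exact .inr ⟨s, inv_mem hs⟩

lemma isLetter_lift_mk_singleton {V : Type*} {φ : V → CoprodI G} (hφ : ∀ z, IsLetter G (φ z))
    (e : V × Bool) : IsLetter G (FreeGroup.lift φ (FreeGroup.mk [e])) := by
  obtain ⟨z, _ | _⟩ := e <;> simp [FreeGroup.lift_mk, hφ z, (hφ z).inv]

lemma exists_isLetter_of_mem_coprodIBall {r : ℕ} {y : CoprodI G} (hy : y ∈ coprodIBall G r) :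
    ∃ f : Fin r → CoprodI G, (∀ u, IsLetter G (f u)) ∧ (List.ofFn f).prod = y := by
  obtain ⟨l, hlen, hl, rfl⟩ := hy
  refine ⟨fun u => l.getD u 1, fun u => ?_, List.prod_ofFn_getD_one l hlen⟩
  dsimp only
  rw [List.getD_eq_getElem?_getD]
  cases h : l[(u : ℕ)]? with
  | none => exact .inl rfl
  | some y =>
    obtain ⟨s, g, rfl⟩ := hl y (List.mem_of_getElem? h)
    exact .inr ⟨s, g, rfl⟩

variable {n : ℕ} (x : Fin n → CoprodI G)

structure IsReducedStack (st : List (ι × Finset (Fin n))) : Prop where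
  mem_range : ∀ P ∈ st, ∀ u ∈ P.2, x u ∈ (of : G P.1 →* CoprodI G).range
  ne_one : ∀ P ∈ st, orderedProd x P.2 ≠ 1
  isChain : st.IsChain fun P Q => P.1 ≠ Q.1

def stackProd (st : List (ι × Finset (Fin n))) : CoprodI G :=
  (st.map fun P => orderedProd x P.2).prod

variable {x}

lemma IsReducedStack.of_cons {P : ι × Finset (Fin n)} {st : List (ι × Finset (Fin n))}
    (h : IsReducedStack x (P :: st)) : IsReducedStack x st :=
  ⟨fun Q hQ => h.mem_range Q (List.mem_cons_of_mem _ hQ),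
    fun Q hQ => h.ne_one Q (List.mem_cons_of_mem _ hQ), h.isChain.tail⟩

variable [DecidableEq ι]

def proj (s : ι) : CoprodI G →* G s :=
  lift (Pi.mulSingle s (MonoidHom.id (G s)))

@[simp]
lemma proj_of_self {s : ι} (g : G s) : proj s (of g) = g := by
  simp [proj]

lemma proj_of_of_ne {i s : ι} (h : i ≠ s) (g : G i) : proj s (of g) = 1 := by
  simp [proj, Pi.mulSingle_eq_of_ne h]

lemma of_proj {s : ι} {y : CoprodI G} (hy : y ∈ (of : G s →* CoprodI G).range) :
    of (proj s y) = y := by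
  obtain ⟨g, rfl⟩ := hy
  rw [proj_of_self]

lemma IsLetter.mem_range_of_proj_ne_one {y : CoprodI G} (hy : IsLetter G y) {s : ι}
    (h : proj s y ≠ 1) : y ∈ (of : G s →* CoprodI G).range := by
  obtain rfl | ⟨t, g, rfl⟩ := hy
  · exact absurd (map_one _) h
  · obtain rfl | hts := eq_or_ne t s
    · exact ⟨g, rfl⟩
    · exact absurd (proj_of_of_ne hts g) h

lemma IsLetter.eq_one_of_forall_proj {y : CoprodI G} (hy : IsLetter G y)
    (h : ∀ s, proj s y = 1) : y = 1 := by
  obtain rfl | ⟨s, hs⟩ := hy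
  · rfl
  · rw [← of_proj hs, h, map_one]

variable (x) in
def localType (s : ι) (A : Finset (Fin n)) : Prop :=
  proj s (orderedProd x A) = 1

/- A stack `[(s₁, A₁), …]` lists the syllables of a reduced word: syllable `k` is the product of
the letters at the positions `Aₖ`, all lying in `G sₖ`. Letters are pushed onto the left end; the
oracle `τ s A`, in use `localType x s A`, says whether a syllable has collapsed to `1`. -/

open Classical in
noncomputable def pushSyllable (τ : ι → Finset (Fin n) → Prop) (s : ι) (B : Finset (Fin n))
    (st : List (ι × Finset (Fin n))) : List (ι × Finset (Fin n)) :=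
  if τ s B then st else (s, B) :: st

noncomputable def pushLetter (τ : ι → Finset (Fin n) → Prop) (s : ι) (v : Fin n) :
    List (ι × Finset (Fin n)) → List (ι × Finset (Fin n))
  | (t, A) :: st =>
    if t = s then pushSyllable τ s (insert v A) st else pushSyllable τ s {v} ((t, A) :: st)
  | [] => pushSyllable τ s {v} []

/- A letter `v` with `τ s {v}` for every `s` is trivial and skipped; otherwise `s` with
`¬τ s {v}` is the factor it lies in. -/
open Classical in
noncomputable def reduceStep (τ : ι → Finset (Fin n) → Prop) (v : Fin n)
    (st : List (ι × Finset (Fin n))) : List (ι × Finset (Fin n)) :=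
  if h : ∃ s, ¬τ s {v} then pushLetter τ h.choose v st else st

noncomputable def reduce (τ : ι → Finset (Fin n) → Prop) (l : List (Fin n)) :
    List (ι × Finset (Fin n)) :=
  l.foldr (reduceStep τ) []

lemma mem_reduceStep {τ : ι → Finset (Fin n) → Prop} {v : Fin n} {st : List (ι × Finset (Fin n))}
    {P : ι × Finset (Fin n)} (hP : P ∈ reduceStep τ v st) {u : Fin n} (hu : u ∈ P.2) :
    u = v ∨ ∃ Q ∈ st, u ∈ Q.2 := by
  unfold reduceStep at hP
  split_ifs at hP
  · rcases st with _ | ⟨⟨t, A⟩, st⟩ <;> simp only [pushLetter, pushSyllable] at hP <;>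
      split_ifs at hP <;> aesop
  · exact .inr ⟨P, hP, hu⟩

lemma mem_reduce (τ : ι → Finset (Fin n) → Prop) {l : List (Fin n)} {P : ι × Finset (Fin n)}
    (hP : P ∈ reduce τ l) {u : Fin n} (hu : u ∈ P.2) : u ∈ l := by
  induction l generalizing P with
  | nil => simp [reduce] at hP
  | cons v l ih =>
    rcases mem_reduceStep hP hu with rfl | ⟨Q, hQ, huQ⟩
    · exact List.mem_cons_self
    · exact List.mem_cons_of_mem _ (ih hQ huQ)

lemma IsReducedStack.pushSyllable {st : List (ι × Finset (Fin n))} (hst : IsReducedStack x st)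
    {s : ι} (hs : ∀ P ∈ st.head?, s ≠ P.1) {B : Finset (Fin n)}
    (hB : ∀ u ∈ B, x u ∈ (of : G s →* CoprodI G).range) :
    IsReducedStack x (pushSyllable (localType x) s B st) ∧
      stackProd x (pushSyllable (localType x) s B st) = orderedProd x B * stackProd x st := by
  unfold CoprodI.pushSyllable
  split_ifs with hτ
  · refine ⟨hst, ?_⟩
    rw [← of_proj (orderedProd_mem x hB), hτ, map_one, one_mul]
  · refine ⟨⟨List.forall_mem_cons.2 ⟨hB, hst.mem_range⟩, List.forall_mem_cons.2 ⟨?_, hst.ne_one⟩,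
      List.isChain_cons.2 ⟨hs, hst.isChain⟩⟩, rfl⟩
    intro h
    exact hτ (by rw [localType, h, map_one])

lemma IsReducedStack.pushLetter {st : List (ι × Finset (Fin n))} (hst : IsReducedStack x st)
    {v : Fin n} (hv : ∀ P ∈ st, ∀ u ∈ P.2, v < u) {s : ι}
    (hxv : x v ∈ (of : G s →* CoprodI G).range) :
    IsReducedStack x (pushLetter (localType x) s v st) ∧
      stackProd x (pushLetter (localType x) s v st) = x v * stackProd x st := by
  have hsingle : ∀ u ∈ ({v} : Finset (Fin n)), x u ∈ (of : G s →* CoprodI G).range := by simpa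
  match st, hst, hv with
  | [], hst, _ => simpa [CoprodI.pushLetter] using hst.pushSyllable (by simp) hsingle
  | (t, A) :: st, hst, hv =>
    rw [CoprodI.pushLetter]
    split_ifs with hts
    · subst hts
      have hA : ∀ u ∈ A, v < u := hv (t, A) List.mem_cons_self
      refine (hst.of_cons.pushSyllable (List.isChain_cons.1 hst.isChain).1
        ((Finset.forall_mem_insert _ _ _).2 ⟨hxv, hst.mem_range _ List.mem_cons_self⟩)).imp_right
        fun h => ?_
      rw [h, orderedProd_insert x hA, mul_assoc]
      rfl
    · simpa using hst.pushSyllable (by simpa [eq_comm] using hts) hsingle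

lemma IsReducedStack.reduceStep {st : List (ι × Finset (Fin n))} (hst : IsReducedStack x st)
    {v : Fin n} (hv : ∀ P ∈ st, ∀ u ∈ P.2, v < u) (hxv : IsLetter G (x v)) :
    IsReducedStack x (reduceStep (localType x) v st) ∧
      stackProd x (reduceStep (localType x) v st) = x v * stackProd x st := by
  rw [CoprodI.reduceStep]
  split_ifs with h
  · exact hst.pushLetter hv
      (hxv.mem_range_of_proj_ne_one (by simpa [localType] using h.choose_spec))
  · push Not at h
    rw [hxv.eq_one_of_forall_proj (by simpa [localType] using h), one_mul]
    exact ⟨hst, rfl⟩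

lemma isReducedStack_reduce (hx : ∀ v, IsLetter G (x v)) {l : List (Fin n)}
    (hl : l.Pairwise (· < ·)) :
    IsReducedStack x (reduce (localType x) l) ∧
      stackProd x (reduce (localType x) l) = (l.map x).prod := by
  induction l with
  | nil => exact ⟨⟨by simp [reduce], by simp [reduce], by simp [reduce]⟩, rfl⟩
  | cons v l ih =>
    obtain ⟨hvl, hl⟩ := List.pairwise_cons.1 hl
    obtain ⟨hst, hprod⟩ := ih hl
    refine (hst.reduceStep (fun P hP u hu => hvl u (mem_reduce _ hP hu)) (hx v)).imp_right
      fun h => ?_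
    rw [List.map_cons, List.prod_cons, ← hprod]
    exact h

lemma IsReducedStack.eq_nil_of_stackProd_eq_one {st : List (ι × Finset (Fin n))}
    (hst : IsReducedStack x st) (h : stackProd x st = 1) : st = [] := by
  classical
  have hof : ∀ P ∈ st, of (proj P.1 (orderedProd x P.2)) = orderedProd x P.2 :=
    fun P hP => of_proj (orderedProd_mem x (hst.mem_range P hP))
  let w : Word G :=
    { toList := st.map fun P => ⟨P.1, proj P.1 (orderedProd x P.2)⟩
      ne_one := by
        simp only [List.mem_map]
        rintro _ ⟨P, hP, rfl⟩ h1
        exact hst.ne_one P hP (by rw [← hof P hP, show proj P.1 _ = 1 from h1, map_one])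
      chain_ne := (List.isChain_map _).2 hst.isChain }
  have hw : w.prod = 1 := by
    rw [← h, Word.prod, stackProd, List.map_map]
    exact congrArg List.prod (List.map_congr_left hof)
  have : w = Word.empty := Word.equiv.symm.injective hw
  simpa [w] using congrArg Word.toList this

theorem prod_ofFn_eq_one_iff_reduce_eq_nil (hx : ∀ v, IsLetter G (x v)) :
    (List.ofFn x).prod = 1 ↔ reduce (localType x) (List.finRange n) = [] := by
  obtain ⟨hst, hprod⟩ := isReducedStack_reduce hx (List.pairwise_lt_finRange n)
  rw [List.ofFn_eq_map, ← hprod]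
  exact ⟨hst.eq_nil_of_stackProd_eq_one, fun h => by rw [h]; rfl⟩

theorem prod_ofFn_eq_one_iff_of_localType_eq {x' : Fin n → CoprodI G}
    (hx : ∀ v, IsLetter G (x v)) (hx' : ∀ v, IsLetter G (x' v)) (h : localType x = localType x') :
    (List.ofFn x).prod = 1 ↔ (List.ofFn x').prod = 1 := by
  rw [prod_ofFn_eq_one_iff_reduce_eq_nil hx, prod_ofFn_eq_one_iff_reduce_eq_nil hx', h]

theorem isStableRel_lift_of_isLetter [Finite ι] (hG : ∀ s, QFStable (G s))
    {α β : Type*} [Finite α] [Finite β] (W : FreeGroup (α ⊕ β)) :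
    IsStableRel fun (a : {a : α → CoprodI G // ∀ z, IsLetter G (a z)})
      (b : {b : β → CoprodI G // ∀ z, IsLetter G (b z)}) =>
        FreeGroup.lift (Sum.elim a.1 b.1) W = 1 := by
  classical
  let x (a : {a : α → CoprodI G // ∀ z, IsLetter G (a z)})
      (b : {b : β → CoprodI G // ∀ z, IsLetter G (b z)}) :=
    FreeGroup.lift (Sum.elim a.1 b.1) ∘ letterWords W
  have hx : ∀ a b v, IsLetter G (x a b v) := fun a b v =>
    isLetter_lift_mk_singleton (fun | .inl z => a.2 z | .inr z => b.2 z) _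
  refine IsStableRel.of_determined
    (Φ := fun a b (c : ι × Finset (Fin W.toWord.length)) => localType (x a b) c.1 c.2)
    (fun c => ?_) fun a b a' b' h hab => ?_
  · refine ((hG c.1).isStableRel (orderedProd (letterWords W) c.2)).comap
      (fun a => proj c.1 ∘ a.1) (fun b => proj c.1 ∘ b.1) fun a b => ?_
    rw [localType, ← map_orderedProd, FreeGroup.apply_lift, Sum.comp_elim]
  · rw [lift_eq_prod_ofFn_letterWords] at hab ⊢
    exact (prod_ofFn_eq_one_iff_of_localType_eq (hx a b) (hx a' b')
      (funext fun s => funext fun A => congrFun h (s, A))).1 hab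

end Monoid.CoprodI

theorem main_theorem_many_factors_general (k : ℕ) (G : Fin k → Type*) [∀ s, Group (G s)]
    (hG : ∀ s, QFStable (G s))
    (p q : ℕ) (w : FreeGroup (Fin p ⊕ Fin q)) (r : ℕ) :
    ∃ n : ℕ, ∀ m : ℕ,
      (∃ (a : Fin m → Fin p → CoprodI G) (b : Fin m → Fin q → CoprodI G),
        (∀ i t, a i t ∈ coprodIBall G r) ∧ (∀ j t, b j t ∈ coprodIBall G r) ∧
        ∀ i j, FreeGroup.lift (Sum.elim (a i) (b j)) w = 1 ↔ i ≤ j) → m ≤ n := by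
  obtain ⟨n, hn⟩ := CoprodI.isStableRel_lift_of_isLetter hG (splitVars r w)
  refine ⟨n, fun m ⟨a, b, ha, hb, hab⟩ => hn m ?_⟩
  choose α hα hαa using fun i t => CoprodI.exists_isLetter_of_mem_coprodIBall (ha i t)
  choose β hβ hβb using fun j t => CoprodI.exists_isLetter_of_mem_coprodIBall (hb j t)
  refine ⟨fun i => ⟨fun z => α i z.1 z.2, fun z => hα i z.1 z.2⟩,
    fun j => ⟨fun z => β j z.1 z.2, fun z => hβ j z.1 z.2⟩, fun i j => ?_⟩
  simp only [lift_splitVars, hαa, hβb]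
  exact hab i j

/-- **Main theorem (arbitrary finitely many factors).** Let `G_1, ..., G_k` be
qf-stable groups and `∗ Gₛ` their free product. For every group word `w(x̄, ȳ)` and
every `r ≥ 1` there exists `n` (depending on `w` and `r`) bounding the `m` for which
there exist tuples `ā_1, ..., ā_m` and `b̄_1, ..., b̄_m` with entries in
`B_r(∗ Gₛ)` such that `w(ā_i, b̄_j) = 1` iff `i ≤ j`. -/
theorem main_theorem_many_factors (k : ℕ) (G : Fin k → Type*) [∀ s, Group (G s)]
    (hG : ∀ s, QFStable (G s))
    (p q : ℕ) (w : FreeGroup (Fin p ⊕ Fin q)) (r : ℕ) (hr : 1 ≤ r) :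
    ∃ n : ℕ, ∀ m : ℕ,
      (∃ (a : Fin m → Fin p → CoprodI G) (b : Fin m → Fin q → CoprodI G),
        (∀ i t, a i t ∈ coprodIBall G r) ∧ (∀ j t, b j t ∈ coprodIBall G r) ∧
        ∀ i j, FreeGroup.lift (Sum.elim (a i) (b j)) w = 1 ↔ i ≤ j) → m ≤ n :=
  main_theorem_many_factors_general k G hG p q w r
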